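/- Define H(σ) := (1/2)√(9σ² − 18σ + 25) + (3/2)σ − 5/2 and s(σ) := (1 + 3σ)·√(H(σ)/(1 + 6H(σ) + H(σ)²)), and let σ₂ be the unique element of (0,1) with s(σ₂) = 1. Then 0.63 < σ₂ < 0.64; in particular σ₂ < 0.745, so the lightlike shock value σ₂ is strictly smaller than the value 0.745 obtained by Smoller and Temple as the limit of their subluminous shock solutions as the shock speed tends to the speed of light. -/
import Mathlib


/-- `H(σ) := (1/2)√(9σ² − 18σ + 25) + (3/2)σ − 5/2`, relating the FRW sound-speed
parameter σ to the TOV sound-speed parameter σ̄ = H(σ). -/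
noncomputable def Hfun (σ : ℝ) : ℝ :=
  (1 / 2) * Real.sqrt (9 * σ ^ 2 - 18 * σ + 25) + (3 / 2) * σ - 5 / 2

/-- The shock speed `s(σ) := (1 + 3σ)√(H(σ)/(1 + 6H(σ) + H(σ)²))` in a locally
Minkowskian frame comoving with the FRW fluid. -/
noncomputable def sfun (σ : ℝ) : ℝ :=
  (1 + 3 * σ) * Real.sqrt (Hfun σ / (1 + 6 * Hfun σ + Hfun σ ^ 2))

lemma sqrt_gt_aux {a : ℝ} : Real.sqrt (9 * a ^ 2 - 18 * a + 25) > 3 * (1 - a) := by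
  have h1 : (0:ℝ) ≤ 9 * a ^ 2 - 18 * a + 25 := by nlinarith [sq_nonneg (a - 1)]
  have h2 := Real.sq_sqrt h1
  have h0 := Real.sqrt_nonneg (9 * a ^ 2 - 18 * a + 25)
  nlinarith [sq_nonneg (Real.sqrt (9 * a ^ 2 - 18 * a + 25) - 3 * (1 - a))]

lemma H_mono {a b : ℝ} (hab : a < b) : Hfun a < Hfun b := by
  have qa : (0:ℝ) ≤ 9 * a ^ 2 - 18 * a + 25 := by nlinarith [sq_nonneg (a - 1)]
  have qb : (0:ℝ) ≤ 9 * b ^ 2 - 18 * b + 25 := by nlinarith [sq_nonneg (b - 1)]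
  have ha2 := Real.sq_sqrt qa
  have hb2 := Real.sq_sqrt qb
  have ha := sqrt_gt_aux (a := a)
  have hb := sqrt_gt_aux (a := b)
  have ha0 := Real.sqrt_nonneg (9 * a ^ 2 - 18 * a + 25)
  have hb0 := Real.sqrt_nonneg (9 * b ^ 2 - 18 * b + 25)
  unfold Hfun
  nlinarith [sq_nonneg (Real.sqrt (9 * a ^ 2 - 18 * a + 25) - Real.sqrt (9 * b ^ 2 - 18 * b + 25)),
    mul_pos (show (0:ℝ) < Real.sqrt (9 * a ^ 2 - 18 * a + 25) + Real.sqrt (9 * b ^ 2 - 18 * b + 25) by nlinarith) (show (0:ℝ) < b - a by linarith)]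

lemma H_zero : Hfun 0 = 0 := by
  unfold Hfun
  have : (9 * (0:ℝ) ^ 2 - 18 * 0 + 25) = 5 ^ 2 := by norm_num
  rw [this, Real.sqrt_sq (by norm_num)]
  ring

lemma H_one : Hfun 1 = 1 := by
  unfold Hfun
  have : (9 * (1:ℝ) ^ 2 - 18 * 1 + 25) = 4 ^ 2 := by norm_num
  rw [this, Real.sqrt_sq (by norm_num)]
  ring

lemma H_nonneg {a : ℝ} (ha : 0 ≤ a) : 0 ≤ Hfun a := by
  rcases eq_or_lt_of_le ha with h | h
  · rw [← h, H_zero]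
  · have := H_mono h; rw [H_zero] at this; linarith

lemma H_le_one {a : ℝ} (ha : a ≤ 1) : Hfun a ≤ 1 := by
  rcases eq_or_lt_of_le ha with h | h
  · rw [h, H_one]
  · have := H_mono h; rw [H_one] at this; linarith

lemma s_mono {a b : ℝ} (ha : 0 ≤ a) (hab : a < b) (hb : b ≤ 1) : sfun a < sfun b := by
  have hHa : 0 ≤ Hfun a := H_nonneg ha
  have hHb : 0 ≤ Hfun b := H_nonneg (by linarith)
  have hHab : Hfun a < Hfun b := H_mono hab
  have hHb1 : Hfun b ≤ 1 := H_le_one hb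
  have hDa : (0:ℝ) < 1 + 6 * Hfun a + Hfun a ^ 2 := by nlinarith
  have hDb : (0:ℝ) < 1 + 6 * Hfun b + Hfun b ^ 2 := by nlinarith
  have hr : Hfun a / (1 + 6 * Hfun a + Hfun a ^ 2) < Hfun b / (1 + 6 * Hfun b + Hfun b ^ 2) := by
    rw [div_lt_div_iff₀ hDa hDb]
    have hab1 : Hfun a * Hfun b < 1 := by nlinarith
    nlinarith [mul_pos (sub_pos.mpr hHab) (sub_pos.mpr hab1)]
  have hr0 : 0 ≤ Hfun a / (1 + 6 * Hfun a + Hfun a ^ 2) := div_nonneg hHa hDa.le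
  have hsq := Real.sqrt_lt_sqrt hr0 hr
  have h0 := Real.sqrt_nonneg (Hfun a / (1 + 6 * Hfun a + Hfun a ^ 2))
  unfold sfun
  have h1 : (0:ℝ) < 1 + 3 * a := by linarith
  nlinarith

lemma s063 : sfun 0.63 < 1 := by
  have hq : (9 * (0.63:ℝ) ^ 2 - 18 * 0.63 + 25) = 17.2321 := by norm_num
  set t := Real.sqrt 17.2321 with ht
  have ht2 : t ^ 2 = 17.2321 := Real.sq_sqrt (by norm_num)
  have ht0 : 0 ≤ t := Real.sqrt_nonneg _
  have hH : Hfun 0.63 = t / 2 - 1.555 := by unfold Hfun; rw [hq]; ring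
  have htlb : 3.11 < t := by nlinarith
  have hHpos : (0:ℝ) < Hfun 0.63 := by rw [hH]; linarith
  have hD : (0:ℝ) < 1 + 6 * Hfun 0.63 + Hfun 0.63 ^ 2 := by nlinarith
  unfold sfun
  have key : Hfun 0.63 / (1 + 6 * Hfun 0.63 + Hfun 0.63 ^ 2) < (1 / 2.89) ^ 2 := by
    rw [div_lt_iff₀ hD]
    rw [hH]
    nlinarith [sq_nonneg (t - 4.16)]
  have := (Real.sqrt_lt' (show (0:ℝ) < 1 / 2.89 by norm_num)).mpr key
  have h0 := Real.sqrt_nonneg (Hfun 0.63 / (1 + 6 * Hfun 0.63 + Hfun 0.63 ^ 2))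
  nlinarith

lemma s064 : 1 < sfun 0.64 := by
  have hq : (9 * (0.64:ℝ) ^ 2 - 18 * 0.64 + 25) = 17.1664 := by norm_num
  set t := Real.sqrt 17.1664 with ht
  have ht2 : t ^ 2 = 17.1664 := Real.sq_sqrt (by norm_num)
  have ht0 : 0 ≤ t := Real.sqrt_nonneg _
  have hH : Hfun 0.64 = t / 2 - 1.54 := by unfold Hfun; rw [hq]; ring
  have htlb : 4.13 < t := by nlinarith [sq_nonneg (t - 4.13)]
  have hHpos : (0:ℝ) < Hfun 0.64 := by rw [hH]; linarith
  have hD : (0:ℝ) < 1 + 6 * Hfun 0.64 + Hfun 0.64 ^ 2 := by nlinarith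
  unfold sfun
  have key : (1 / 2.92 : ℝ) ^ 2 < Hfun 0.64 / (1 + 6 * Hfun 0.64 + Hfun 0.64 ^ 2) := by
    rw [lt_div_iff₀ hD]
    rw [hH]
    nlinarith [sq_nonneg (t - 4.15)]
  have := (Real.lt_sqrt (show (0:ℝ) ≤ 1 / 2.92 by norm_num)).mpr key
  nlinarith

/-- the lightlike shock value `σ₂ ∈ (0,1)` (with `s(σ₂) = 1`) satisfies
`0.63 < σ₂ < 0.64`; in particular `σ₂ < 0.745`, the limiting value of the
Smoller–Temple subluminous shocks. -/
theorem stmt_14 (σ₂ : ℝ) (hσ₂ : σ₂ ∈ Set.Ioo (0 : ℝ) 1) (hs : sfun σ₂ = 1) :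
    0.63 < σ₂ ∧ σ₂ < 0.64 ∧ σ₂ < 0.745 := by
  obtain ⟨h0, h1⟩ := hσ₂
  have hlow : 0.63 < σ₂ := by
    rcases lt_trichotomy σ₂ 0.63 with h | h | h
    · exfalso
      have := s_mono (le_of_lt h0) h (by norm_num)
      have := s063
      linarith
    · exfalso; rw [h] at hs; have := s063; linarith
    · exact h
  have hhigh : σ₂ < 0.64 := by
    rcases lt_trichotomy σ₂ 0.64 with h | h | h
    · exact h
    · exfalso; rw [h] at hs; have := s064; linarith
    · exfalso
      have := s_mono (show (0:ℝ) ≤ 0.64 by norm_num) h (le_of_lt h1)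
      have := s064
      linarith
  exact ⟨hlow, hhigh, by linarith⟩
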